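/- Let (X_{ij})_{i,j∈ℤ} be a stationary random field that is regularly varying with index α∈(0,2). Then for every δ>0, lim_{ε→0⁺} limsup_{n→∞} ℙ(‖Â_n^{<ε}‖ > δ) = 0. -/

import Mathlib

open MeasureTheory ProbabilityTheory Filter Matrix

noncomputable section

/-- A real-valued random field indexed by `ℤ × ℤ` is stationary if its finite-dimensional
distributions are invariant under all shifts of `ℤ²`. -/
def IsStationaryField {Ω : Type*} [MeasurableSpace Ω] (μ : Measure Ω)
    (X : ℤ × ℤ → Ω → ℝ) : Prop :=
  ∀ a b : ℤ,
    Measure.map (fun ω => fun p : ℤ × ℤ => X (p.1 + a, p.2 + b) ω) μ =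
      Measure.map (fun ω => fun p : ℤ × ℤ => X p ω) μ

/-- A random field `X` is `m`-dependent if any two subfamilies whose index sets are separated
by a (sup-)distance greater than `m` are independent. -/
def IsMDependent {Ω : Type*} [MeasurableSpace Ω] (μ : Measure Ω)
    (X : ℤ × ℤ → Ω → ℝ) (m : ℕ) : Prop :=
  ∀ A B : Set (ℤ × ℤ),
    (∀ p ∈ A, ∀ q ∈ B, (m : ℤ) < max |p.1 - q.1| |p.2 - q.2|) →
    IndepFun (fun ω => fun p : A => X p.1 ω) (fun ω => fun q : B => X q.1 ω) μ

/-- A positive function is slowly varying if `L (c x) / L x → 1` as `x → ∞` for every `c > 0`. -/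
def SlowlyVarying (L : ℝ → ℝ) : Prop :=
  (∀ x : ℝ, 0 < x → 0 < L x) ∧
    ∀ c : ℝ, 0 < c → Tendsto (fun x => L (c * x) / L x) atTop (nhds 1)

/-- The field is regularly varying with index `α`: `ℙ(|X₀₀| > x) = x^(-α) L(x)`
for a slowly varying `L`. -/
def IsRegVarying {Ω : Type*} [MeasurableSpace Ω] (μ : Measure Ω)
    (X : ℤ × ℤ → Ω → ℝ) (α : ℝ) : Prop :=
  ∃ L : ℝ → ℝ, SlowlyVarying L ∧
    ∀ x : ℝ, 0 < x → (μ {ω | x < |X (0, 0) ω|}).toReal = x ^ (-α) * L x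

/-- The symmetrized field `X̂`. -/
def symX {Ω : Type*} (X : ℤ × ℤ → Ω → ℝ) (i j : ℤ) (ω : Ω) : ℝ :=
  if i ≤ j then X (i, j) ω else X (j, i) ω

/-- `(a_n)` is a normalizing sequence: `a_n → ∞` and `n ℙ(|X₀₀| > a_n) → 1`. -/
def IsNormSeq {Ω : Type*} [MeasurableSpace Ω] (μ : Measure Ω)
    (X : ℤ × ℤ → Ω → ℝ) (a : ℕ → ℝ) : Prop :=
  Tendsto a atTop atTop ∧
    Tendsto (fun n : ℕ => (n : ℝ) * (μ {ω | a n < |X (0, 0) ω|}).toReal) atTop (nhds 1)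

/-- The Wigner matrix `Â_n = (X̂_{ij} / b)_{1 ≤ i,j ≤ n}`. -/
def wignerMat {Ω : Type*} (X : ℤ × ℤ → Ω → ℝ) (b : ℝ) (n : ℕ) (ω : Ω) :
    Matrix (Fin n) (Fin n) ℝ :=
  Matrix.of fun i j => symX X ((i : ℕ) + 1 : ℤ) ((j : ℕ) + 1 : ℤ) ω / b

/-- The `p × n` data matrix `A = (X_{ij} / c)_{1 ≤ i ≤ p, 1 ≤ j ≤ n}`. -/
def dataMat {Ω : Type*} (X : ℤ × ℤ → Ω → ℝ) (c : ℝ) (p n : ℕ) (ω : Ω) :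
    Matrix (Fin p) (Fin n) ℝ :=
  Matrix.of fun i j => X (((i : ℕ) + 1 : ℤ), ((j : ℕ) + 1 : ℤ)) ω / c

/-- Entrywise truncation keeping the entries of absolute value `> t` : `M^{>t}`. -/
def truncGt {p q : ℕ} (M : Matrix (Fin p) (Fin q) ℝ) (t : ℝ) : Matrix (Fin p) (Fin q) ℝ :=
  Matrix.of fun i j => if t < |M i j| then M i j else 0

/-- `M^{<t} := M - M^{>t}`, i.e. the entries of absolute value `≤ t`. -/
def truncLe {p q : ℕ} (M : Matrix (Fin p) (Fin q) ℝ) (t : ℝ) : Matrix (Fin p) (Fin q) ℝ :=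
  M - truncGt M t

/-- The spectral norm (largest singular value) of a rectangular real matrix, realized as the
operator norm of the induced map between Euclidean spaces. -/
def specNorm {p q : ℕ} (M : Matrix (Fin p) (Fin q) ℝ) : ℝ :=
  ‖LinearMap.toContinuousLinearMap (Matrix.toEuclideanLin M)‖

/-- The event that the `(k,l)` block (of size `r × r`, `1`-based block indices) of the
matrix `(X̂_{ij}/b)` has max-norm `> ε`. -/
def blockExceed {Ω : Type*} (X : ℤ × ℤ → Ω → ℝ) (b : ℝ) (r k l : ℕ) (ε : ℝ) (ω : Ω) : Prop :=
  ∃ i ∈ Finset.Ioc ((k - 1) * r) (k * r), ∃ j ∈ Finset.Ioc ((l - 1) * r) (l * r),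
    ε < |symX X (i : ℤ) (j : ℤ) ω / b|

/-- `r_n = n^(1-η)` (as a natural number, via the floor). -/
def rseq (η : ℝ) (n : ℕ) : ℕ := ⌊(n : ℝ) ^ (1 - η)⌋₊

/-- `k_n = n^η` (as a natural number, via the floor). -/
def kseq (η : ℝ) (n : ℕ) : ℕ := ⌊(n : ℝ) ^ η⌋₊

/-- The set of `n` for which `n^(1-η)` and `n^η` are integers. -/
def goodSet (η : ℝ) : Set ℕ :=
  {n | ((rseq η n : ℝ) = (n : ℝ) ^ (1 - η)) ∧ ((kseq η n : ℝ) = (n : ℝ) ^ η)}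

/-- `lam` is an eigenvalue of the real matrix `M`. -/
def IsEigenvalue {n : Type*} [Fintype n] (M : Matrix n n ℝ) (lam : ℝ) : Prop :=
  ∃ v : n → ℝ, v ≠ 0 ∧ M.mulVec v = lam • v

/-- The multiset of singular values of a rectangular real matrix: the square roots of the
eigenvalues of `Mᵀ M` (`= Mᴴ M` over `ℝ`), with multiplicity. -/
def singularValues {p q : ℕ} (M : Matrix (Fin p) (Fin q) ℝ) : Multiset ℝ :=
  Finset.univ.val.map fun i =>
    Real.sqrt ((show (Mᵀ * M).IsHermitian by
      simpa [Matrix.conjTranspose_eq_transpose_of_trivial] using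
        Matrix.isHermitian_conjTranspose_mul_self M).eigenvalues i)

/-- The eigenvalues of a real symmetric matrix, sorted increasingly (as a list);
junk value for non-symmetric matrices. -/
def sortedEigs {N : ℕ} (M : Matrix (Fin N) (Fin N) ℝ) : List ℝ :=
  if h : M.IsHermitian then (Finset.univ.val.map h.eigenvalues).sort (· ≤ ·)
  else List.replicate N 0

/-- The index of row `i` of block-row `a` inside a `(k*r) × (k*r)` matrix partitioned
into `r × r` blocks. -/
def blkIdx {k r : ℕ} (a : Fin k) (i : Fin r) : Fin (k * r) :=
  ⟨a.1 * r + i.1, by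
    have hi := i.2
    have ha := a.2
    have h1 : a.1 * r + i.1 < (a.1 + 1) * r := by nlinarith
    have h2 : (a.1 + 1) * r ≤ k * r := by nlinarith
    exact lt_of_lt_of_le h1 h2⟩

/-- The `(a,b)` block (of size `r × r`) of a `(k*r) × (k*r)` matrix. -/
def blockOf {k r : ℕ} (H : Matrix (Fin (k * r)) (Fin (k * r)) ℝ) (a b : Fin k) :
    Matrix (Fin r) (Fin r) ℝ :=
  Matrix.of fun i j => H (blkIdx a i) (blkIdx b j)

/-- The `n × n` matrix with entries `X̂_{ij} 1{|X̂_{ij}| < t}` (not yet normalized). -/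
def truncSymMat {Ω : Type*} (X : ℤ × ℤ → Ω → ℝ) (n : ℕ) (t : ℝ) (ω : Ω) :
    Matrix (Fin n) (Fin n) ℝ :=
  Matrix.of fun i j =>
    if |symX X ((i : ℕ) + 1 : ℤ) ((j : ℕ) + 1 : ℤ) ω| < t
    then symX X ((i : ℕ) + 1 : ℤ) ((j : ℕ) + 1 : ℤ) ω else 0

/-!
Chebyshev's inequality and `‖M‖ ≤ ‖M‖_F` reduce the claim to a truncated second moment: by
stationarity every entry of `Â_n^{<ε}` has the law of `X₀₀ 1{|X₀₀| ≤ ε b_n} / b_n`, so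
`ℙ(‖Â_n^{<ε}‖ > δ) ≤ n² 𝔼[(X₀₀ / b_n)² 1{|X₀₀| ≤ ε b_n}] / δ²`.
Fix `β ∈ (α, 2)`. Regular variation gives the doubling inequality `T x ≤ 2^β T (2x)` for the tail
`T x = ℙ(|X₀₀| > x)` and large `x`, hence Potter's bound `T y ≤ 2^β (x/y)^β T x` for `x₀ ≤ y ≤ x`.
Cutting `{|X₀₀| ≤ ε b_n}` into the dyadic shells `ε b_n / 2^(k+1) < |X₀₀| ≤ ε b_n / 2^k` down to
level `x₀`, Potter's bound turns the moment into a geometric series, of order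
`x₀² / b_n² + ε^(2-β) T b_n`. As `n² T b_n → 1`, whence also `n / b_n → 0`, the limsup is
`O(ε^(2-β) / δ²)`, which vanishes as `ε → 0`.
-/

open Finset Topology
open scoped ENNReal

section RegularVariation

variable {T : ℝ → ℝ} {x₀ β : ℝ}

def PotterBound (T : ℝ → ℝ) (β x₀ : ℝ) : Prop :=
  ∀ y x, x₀ ≤ y → y ≤ x → T y ≤ 2 ^ β * (x / y) ^ β * T x

lemma le_pow_mul_of_le_mul_two {C : ℝ} (hC : 0 ≤ C) (hx₀ : 0 ≤ x₀)
    (hdbl : ∀ x, x₀ ≤ x → T x ≤ C * T (2 * x)) :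
    ∀ (j : ℕ) {y : ℝ}, x₀ ≤ y → T y ≤ C ^ j * T (2 ^ j * y)
  | 0, y, _ => by simp
  | j + 1, y, hy => by
    have hy' : x₀ ≤ 2 ^ j * y :=
      hy.trans (le_mul_of_one_le_left (hx₀.trans hy) (one_le_pow₀ one_le_two))
    calc T y ≤ C ^ j * T (2 ^ j * y) := le_pow_mul_of_le_mul_two hC hx₀ hdbl j hy
      _ ≤ C ^ j * (C * T (2 * (2 ^ j * y))) := by gcongr; exact hdbl _ hy'
      _ = C ^ (j + 1) * T (2 ^ (j + 1) * y) := by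
          rw [pow_succ, pow_succ, mul_assoc, mul_comm _ 2, mul_assoc]

/-- Potter's bound, obtained by iterating the doubling inequality `⌈log₂ (x / y)⌉` times. -/
theorem potterBound_of_doubling (hT0 : ∀ x, 0 ≤ T x) (hanti : Antitone T) (hβ : 0 ≤ β)
    (hx₀ : 0 < x₀) (hdbl : ∀ x, x₀ ≤ x → T x ≤ 2 ^ β * T (2 * x)) : PotterBound T β x₀ := by
  intro y x hy hyx
  have hy0 : 0 < y := hx₀.trans_le hy
  obtain ⟨j, hjle, hjlt⟩ := exists_nat_pow_near ((one_le_div hy0).2 hyx) one_lt_two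
  calc T y ≤ (2 ^ β) ^ (j + 1) * T (2 ^ (j + 1) * y) :=
        le_pow_mul_of_le_mul_two (by positivity) hx₀.le hdbl _ hy
    _ ≤ (2 ^ β) ^ (j + 1) * T x := by
        gcongr
        exact hanti ((div_lt_iff₀ hy0).1 hjlt).le
    _ = 2 ^ β * ((2 : ℝ) ^ j) ^ β * T x := by
        rw [pow_succ', Real.rpow_pow_comm zero_le_two]
    _ ≤ 2 ^ β * (x / y) ^ β * T x := by
        gcongr
        exact hT0 x

lemma SlowlyVarying.eventually_le_two_rpow_mul {L : ℝ → ℝ} (hL : SlowlyVarying L) {α : ℝ}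
    (hαβ : α < β) : ∀ᶠ x in atTop, x ^ (-α) * L x ≤ 2 ^ β * ((2 * x) ^ (-α) * L (2 * x)) := by
  have hlt : (2 : ℝ) ^ (α - β) < 1 := Real.rpow_lt_one_of_one_lt_of_neg one_lt_two (by linarith)
  filter_upwards [(hL.2 2 two_pos).eventually (eventually_gt_nhds hlt),
    eventually_gt_atTop 0] with x hx hx0
  have hLx := hL.1 x hx0
  have hL2x : L x ≤ 2 ^ (β - α) * L (2 * x) := by
    rw [lt_div_iff₀ hLx] at hx
    calc L x = 2 ^ (β - α) * (2 ^ (α - β) * L x) := by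
          rw [← mul_assoc, ← Real.rpow_add two_pos]; simp
      _ ≤ 2 ^ (β - α) * L (2 * x) := by gcongr
  calc x ^ (-α) * L x ≤ x ^ (-α) * (2 ^ (β - α) * L (2 * x)) := by gcongr
    _ = 2 ^ β * ((2 * x) ^ (-α) * L (2 * x)) := by
        rw [Real.mul_rpow zero_le_two hx0.le, Real.rpow_sub two_pos, Real.rpow_neg zero_le_two]
        field_simp

lemma tendsto_div_sq_of_le_rpow {u b : ℕ → ℝ} {C : ℝ} (hβ : β < 2) (hu0 : ∀ n, 0 ≤ u n)
    (hb : Tendsto b atTop atTop) (hu : ∀ᶠ n in atTop, u n ≤ C * b n ^ β) :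
    Tendsto (fun n => u n / b n ^ 2) atTop (𝓝 0) := by
  have hlim : Tendsto (fun n => C * b n ^ (β - 2)) atTop (𝓝 0) := by
    have := ((tendsto_rpow_neg_atTop (by linarith : 0 < 2 - β)).comp hb).const_mul C
    simpa [neg_sub, Function.comp_def] using this
  refine squeeze_zero' (Eventually.of_forall fun n => div_nonneg (hu0 n) (sq_nonneg _)) ?_ hlim
  filter_upwards [hu, hb.eventually_gt_atTop 0] with n hun hbn
  rw [Real.rpow_sub hbn, Real.rpow_two, ← mul_div_assoc]
  gcongr

lemma tendsto_sq_div_sq_of_potterBound {b : ℕ → ℝ} (hβ : β < 2) (hx₀ : 0 < x₀)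
    (hTx₀ : 0 < T x₀) (hpotter : PotterBound T β x₀)
    (hb : Tendsto b atTop atTop) (hbT : ∀ᶠ n : ℕ in atTop, (n : ℝ) ^ 2 * T (b n) ≤ 2) :
    Tendsto (fun n : ℕ => (n : ℝ) ^ 2 / b n ^ 2) atTop (𝓝 0) := by
  refine tendsto_div_sq_of_le_rpow (C := 2 * 2 ^ β / (T x₀ * x₀ ^ β)) hβ (fun n => sq_nonneg _)
    hb ?_
  filter_upwards [hbT, hb.eventually_ge_atTop x₀] with n hn hbn
  have hP := hpotter x₀ (b n) le_rfl hbn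
  rw [Real.div_rpow (hx₀.le.trans hbn) hx₀.le] at hP
  rw [div_mul_eq_mul_div, le_div_iff₀ (by positivity)]
  calc (n : ℝ) ^ 2 * (T x₀ * x₀ ^ β)
      ≤ (n : ℝ) ^ 2 * (2 ^ β * (b n ^ β / x₀ ^ β) * T (b n) * x₀ ^ β) := by gcongr
    _ = 2 ^ β * b n ^ β * ((n : ℝ) ^ 2 * T (b n)) := by field_simp
    _ ≤ 2 ^ β * b n ^ β * 2 := by
        gcongr
        exact mul_nonneg (by positivity) (Real.rpow_nonneg (hx₀.le.trans hbn) β)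
    _ = 2 * 2 ^ β * b n ^ β := by ring

end RegularVariation

lemma tendsto_ofReal_mul_rpow_nhdsGT_zero {p : ℝ} (hp : 0 < p) (C : ℝ) :
    Tendsto (fun ε : ℝ => ENNReal.ofReal (C * ε ^ p)) (𝓝[>] 0) (𝓝 0) := by
  have h := ((Real.continuousAt_rpow_const 0 p (Or.inr hp.le)).tendsto.const_mul C).mono_left
    (nhdsWithin_le_nhds (s := Set.Ioi 0))
  simpa [Real.zero_rpow hp.ne'] using ENNReal.tendsto_ofReal h

lemma sq_le_add_sum_dyadic {z s : ℝ} (hs : 0 ≤ s) :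
    ∀ (K : ℕ) {ε : ℝ}, |z| ≤ ε → ε / 2 ^ K ≤ s →
      z ^ 2 ≤ s ^ 2 + ∑ k ∈ range K, if ε / 2 ^ (k + 1) < |z| then (ε / 2 ^ k) ^ 2 else 0
  | 0, ε, hz, hK => by
    rw [pow_zero, div_one] at hK
    rw [sum_range_zero, add_zero, ← sq_abs z]
    exact pow_le_pow_left₀ (abs_nonneg z) (hz.trans hK) 2
  | K + 1, ε, hz, hK => by
    have hterm_nonneg : ∀ (k : ℕ) (c : ℝ), 0 ≤ if ε / 2 ^ (k + 1) < |z| then c ^ 2 else 0 :=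
      fun k c => by split_ifs <;> positivity
    rw [sum_range_succ']
    by_cases hzε : ε / 2 < |z|
    · rw [if_pos (by simpa using hzε), pow_zero, div_one]
      have : z ^ 2 ≤ ε ^ 2 := by
        rw [← sq_abs z]; exact pow_le_pow_left₀ (abs_nonneg z) hz 2
      have := sum_nonneg fun k (_ : k ∈ range K) => hterm_nonneg (k + 1) (ε / 2 ^ (k + 1))
      nlinarith
    · have ih := sq_le_add_sum_dyadic hs K (not_lt.1 hzε) (by rwa [div_div, ← pow_succ'])
      simp only [div_div, ← pow_succ'] at ih
      refine ih.trans ?_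
      gcongr
      exact le_add_of_nonneg_right (hterm_nonneg 0 _)

lemma exists_least_div_two_pow_le (t : ℝ) {s : ℝ} (hs : 0 < s) :
    ∃ K : ℕ, t / 2 ^ K ≤ s ∧ ∀ k < K, s < t / 2 ^ k := by
  have hex : ∃ K : ℕ, t / 2 ^ K ≤ s := by
    obtain ⟨K, hK⟩ := pow_unbounded_of_one_lt (t / s) one_lt_two
    exact ⟨K, (div_le_iff₀ (by positivity)).2 (by rw [div_lt_iff₀ hs] at hK; linarith)⟩
  exact ⟨Nat.find hex, Nat.find_spec hex, fun k hk => not_le.1 (Nat.find_min hex hk)⟩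

lemma sq_div_two_pow_mul_rpow {ε : ℝ} (hε : 0 < ε) (β : ℝ) (k : ℕ) :
    (ε / 2 ^ k) ^ 2 * (2 ^ (k + 1) / ε) ^ β = 2 ^ β * ε ^ (2 - β) * ((2 : ℝ) ^ (β - 2)) ^ k := by
  rw [Real.div_rpow (by positivity) hε.le, pow_succ (2 : ℝ) k,
    Real.mul_rpow (by positivity) zero_le_two, ← Real.rpow_pow_comm zero_le_two, Real.rpow_sub hε,
    Real.rpow_sub two_pos, div_pow, Real.rpow_two, Real.rpow_two, div_pow, ← pow_mul,
    mul_comm k 2, pow_mul]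
  field_simp

lemma sum_sq_mul_le_of_potterBound {T : ℝ → ℝ} {β x₀ ε c : ℝ} {K : ℕ} (hβ : β < 2)
    (hpotter : PotterBound T β x₀) (hTc : 0 ≤ T c)
    (hε : 0 < ε) (hε1 : ε ≤ 1) (hc : 0 < c) (hK : ∀ k < K, 2 * x₀ < ε / 2 ^ k * c) :
    ∑ k ∈ range K, (ε / 2 ^ k) ^ 2 * T (ε / 2 ^ (k + 1) * c) ≤
      2 ^ (2 * β) / (1 - 2 ^ (β - 2)) * ε ^ (2 - β) * T c := by
  have hq : (2 : ℝ) ^ (β - 2) < 1 := Real.rpow_lt_one_of_one_lt_of_neg one_lt_two (by linarith)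
  have hterm : ∀ k ∈ range K, (ε / 2 ^ k) ^ 2 * T (ε / 2 ^ (k + 1) * c) ≤
      2 ^ (2 * β) * ε ^ (2 - β) * T c * ((2 : ℝ) ^ (β - 2)) ^ k := by
    intro k hk
    have hlevel : x₀ ≤ ε / 2 ^ (k + 1) * c := by
      have := hK k (mem_range.1 hk)
      rw [pow_succ, ← div_div]
      linarith
    have hle : ε / 2 ^ (k + 1) * c ≤ c :=
      mul_le_of_le_one_left hc.le (div_le_one_of_le₀ (hε1.trans (one_le_pow₀ one_le_two))
        (by positivity))
    have hratio : c / (ε / 2 ^ (k + 1) * c) = 2 ^ (k + 1) / ε := by field_simp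
    calc (ε / 2 ^ k) ^ 2 * T (ε / 2 ^ (k + 1) * c)
        ≤ (ε / 2 ^ k) ^ 2 * (2 ^ β * (2 ^ (k + 1) / ε) ^ β * T c) := by
          rw [← hratio]; gcongr; exact hpotter _ _ hlevel hle
      _ = 2 ^ β * ((ε / 2 ^ k) ^ 2 * (2 ^ (k + 1) / ε) ^ β) * T c := by ring
      _ = 2 ^ (2 * β) * ε ^ (2 - β) * T c * ((2 : ℝ) ^ (β - 2)) ^ k := by
          rw [sq_div_two_pow_mul_rpow hε, two_mul, Real.rpow_add two_pos]; ring
  calc _ ≤ ∑ k ∈ range K, 2 ^ (2 * β) * ε ^ (2 - β) * T c * ((2 : ℝ) ^ (β - 2)) ^ k :=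
        sum_le_sum hterm
    _ = 2 ^ (2 * β) * ε ^ (2 - β) * T c * ∑ k ∈ range K, ((2 : ℝ) ^ (β - 2)) ^ k := by
        rw [mul_sum]
    _ ≤ 2 ^ (2 * β) * ε ^ (2 - β) * T c * (1 / (1 - 2 ^ (β - 2))) := by
        refine mul_le_mul_of_nonneg_left ?_ (mul_nonneg (by positivity) hTc)
        have := geom_sum_Ico_le_of_lt_one (m := 0) (n := K)
          (by positivity : (0 : ℝ) ≤ 2 ^ (β - 2)) hq
        rwa [← range_eq_Ico, pow_zero] at this
    _ = 2 ^ (2 * β) / (1 - 2 ^ (β - 2)) * ε ^ (2 - β) * T c := by ring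

lemma specNorm_le_sqrt_sum_sq {p q : ℕ} (M : Matrix (Fin p) (Fin q) ℝ) :
    specNorm M ≤ √(∑ i, ∑ j, M i j ^ 2) := by
  refine ContinuousLinearMap.opNorm_le_bound _ (Real.sqrt_nonneg _) fun v => ?_
  simp only [LinearMap.coe_toContinuousLinearMap', EuclideanSpace.norm_eq, Real.norm_eq_abs,
    sq_abs, Matrix.toLpLin_apply, Matrix.mulVec, dotProduct]
  rw [← Real.sqrt_mul (by positivity), sum_mul]
  gcongr with i
  exact sum_mul_sq_le_sq_mul_sq _ _ _

lemma truncLe_apply {p q : ℕ} (M : Matrix (Fin p) (Fin q) ℝ) (t : ℝ) (i : Fin p) (j : Fin q) :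
    truncLe M t i j = if t < |M i j| then 0 else M i j := by
  simp only [truncLe, truncGt, Matrix.sub_apply, Matrix.of_apply]
  split_ifs <;> simp

lemma symX_apply {Ω : Type*} (X : ℤ × ℤ → Ω → ℝ) (i j : ℤ) (ω : Ω) :
    symX X i j ω = X (min i j, max i j) ω := by
  unfold symX
  split_ifs with h
  · rw [min_eq_left h, max_eq_right h]
  · rw [min_eq_right (le_of_not_ge h), max_eq_left (le_of_not_ge h)]

section Probability

variable {Ω : Type*} [MeasurableSpace Ω]

def tailProb (μ : Measure Ω) (Y : Ω → ℝ) (x : ℝ) : ℝ := μ.real {ω | x < |Y ω|}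

lemma tailProb_nonneg (μ : Measure Ω) (Y : Ω → ℝ) (x : ℝ) : 0 ≤ tailProb μ Y x :=
  measureReal_nonneg

lemma tailProb_antitone (μ : Measure Ω) [IsFiniteMeasure μ] (Y : Ω → ℝ) :
    Antitone (tailProb μ Y) :=
  fun _ _ hxy => measureReal_mono fun _ hω => lt_of_le_of_lt hxy hω

lemma IsRegVarying.tailProb_pos {μ : Measure Ω} {X : ℤ × ℤ → Ω → ℝ} {α : ℝ}
    (hreg : IsRegVarying μ X α) {x : ℝ} (hx : 0 < x) : 0 < tailProb μ (X (0, 0)) x := by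
  obtain ⟨L, hL, hT⟩ := hreg
  rw [tailProb, measureReal_def, hT x hx]
  exact mul_pos (Real.rpow_pos_of_pos hx _) (hL.1 x hx)

theorem IsRegVarying.exists_potterBound {μ : Measure Ω} [IsFiniteMeasure μ]
    {X : ℤ × ℤ → Ω → ℝ} {α β : ℝ} (hreg : IsRegVarying μ X α) (hαβ : α < β) (hβ : 0 ≤ β) :
    ∃ x₀ > 0, PotterBound (tailProb μ (X (0, 0))) β x₀ := by
  obtain ⟨L, hL, hT⟩ := hreg
  obtain ⟨x₁, hx₁⟩ := eventually_atTop.1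
    ((hL.eventually_le_two_rpow_mul hαβ).and (eventually_gt_atTop 0))
  refine ⟨max x₁ 1, by positivity,
    potterBound_of_doubling (tailProb_nonneg μ _) (tailProb_antitone μ _) hβ (by positivity) ?_⟩
  intro x hx
  obtain ⟨hdbl, hx0⟩ := hx₁ x (le_of_max_le_left hx)
  simpa only [tailProb, measureReal_def, hT x hx0, hT (2 * x) (by positivity)] using hdbl

lemma IsStationaryField.map_eq_map_zero {μ : Measure Ω} {X : ℤ × ℤ → Ω → ℝ}
    (hX : IsStationaryField μ X) (hmeas : ∀ p, Measurable (X p)) (p : ℤ × ℤ) :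
    μ.map (X p) = μ.map (X (0, 0)) := by
  have hfield : ∀ a b : ℤ, Measurable fun ω (q : ℤ × ℤ) => X (q.1 + a, q.2 + b) ω :=
    fun _ _ => measurable_pi_lambda _ fun _ => hmeas _
  have h := congrArg (Measure.map fun f : ℤ × ℤ → ℝ => f (0, 0)) (hX p.1 p.2)
  rw [Measure.map_map (measurable_pi_apply _) (hfield _ _),
    Measure.map_map (measurable_pi_apply _) (by simpa using hfield 0 0)] at h
  simpa [Function.comp_def] using h

lemma lintegral_sq_truncate_le_dyadic (μ : Measure Ω) {Y : Ω → ℝ} (hY : Measurable Y)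
    {ε s : ℝ} {K : ℕ} (hs : 0 ≤ s) (hK : ε / 2 ^ K ≤ s) :
    ∫⁻ ω, ENNReal.ofReal ((if ε < |Y ω| then 0 else Y ω) ^ 2) ∂μ ≤
      ENNReal.ofReal (s ^ 2) * μ Set.univ +
        ∑ k ∈ range K, ENNReal.ofReal ((ε / 2 ^ k) ^ 2) * μ {ω | ε / 2 ^ (k + 1) < |Y ω|} := by
  have hlevel : ∀ k : ℕ, MeasurableSet {ω | ε / 2 ^ (k + 1) < |Y ω|} :=
    fun k => measurableSet_lt measurable_const hY.abs
  calc ∫⁻ ω, ENNReal.ofReal ((if ε < |Y ω| then 0 else Y ω) ^ 2) ∂μ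
      ≤ ∫⁻ ω, (ENNReal.ofReal (s ^ 2) + ∑ k ∈ range K,
          {ω | ε / 2 ^ (k + 1) < |Y ω|}.indicator (fun _ => ENNReal.ofReal ((ε / 2 ^ k) ^ 2)) ω)
          ∂μ := by
        refine lintegral_mono fun ω => ?_
        split_ifs with h
        · simp
        · calc ENNReal.ofReal (Y ω ^ 2)
              ≤ ENNReal.ofReal (s ^ 2 + ∑ k ∈ range K,
                  if ε / 2 ^ (k + 1) < |Y ω| then (ε / 2 ^ k) ^ 2 else 0) :=
                ENNReal.ofReal_le_ofReal (sq_le_add_sum_dyadic hs K (not_lt.1 h) hK)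
            _ = _ := by
                rw [ENNReal.ofReal_add (by positivity)
                  (sum_nonneg fun k _ => by split_ifs <;> positivity),
                  ENNReal.ofReal_sum_of_nonneg fun k _ => by split_ifs <;> positivity]
                simp only [Set.indicator_apply, Set.mem_ofPred_eq, apply_ite ENNReal.ofReal,
                  ENNReal.ofReal_zero]
    _ = _ := by
        rw [lintegral_add_left measurable_const, lintegral_const,
          lintegral_finsetSum _ fun k _ => measurable_const.indicator (hlevel k)]
        simp only [lintegral_indicator_const (hlevel _)]

theorem measure_lt_specNorm_truncLe_wignerMat_le (μ : Measure Ω) {X : ℤ × ℤ → Ω → ℝ}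
    (hmeas : ∀ p, Measurable (X p)) (hlaw : ∀ p, μ.map (X p) = μ.map (X (0, 0)))
    (c ε : ℝ) {δ : ℝ} (hδ : 0 < δ) (n : ℕ) :
    μ {ω | δ < specNorm (truncLe (wignerMat X c n ω) ε)} ≤
      n ^ 2 * (∫⁻ ω, ENNReal.ofReal ((if ε < |X (0, 0) ω / c| then 0 else X (0, 0) ω / c) ^ 2) ∂μ)
        / ENNReal.ofReal (δ ^ 2) := by
  set F : ℝ → ℝ≥0∞ := fun y => ENNReal.ofReal ((if ε < |y / c| then 0 else y / c) ^ 2)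
  have hF : Measurable F := by
    refine ENNReal.measurable_ofReal.comp (Measurable.pow_const ?_ 2)
    exact Measurable.ite (measurableSet_lt measurable_const (measurable_id.div_const c).abs)
      measurable_const (measurable_id.div_const c)
  set idx : Fin n → Fin n → ℤ × ℤ := fun i j =>
    (min ((i : ℕ) + 1 : ℤ) ((j : ℕ) + 1), max ((i : ℕ) + 1 : ℤ) ((j : ℕ) + 1))
  have hentry : ∀ ω i j, ENNReal.ofReal (truncLe (wignerMat X c n ω) ε i j ^ 2) =
      F (X (idx i j) ω) := by
    intro ω i j
    simp only [truncLe_apply, wignerMat, Matrix.of_apply, symX_apply, F, idx]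
    rfl
  have hevent : {ω | δ < specNorm (truncLe (wignerMat X c n ω) ε)} ⊆
      {ω | ENNReal.ofReal (δ ^ 2) ≤ ∑ i, ∑ j, F (X (idx i j) ω)} := by
    intro ω hω
    have hlt := (Real.lt_sqrt hδ.le).1 (hω.trans_le (specNorm_le_sqrt_sum_sq _))
    calc ENNReal.ofReal (δ ^ 2)
        ≤ ENNReal.ofReal (∑ i, ∑ j, truncLe (wignerMat X c n ω) ε i j ^ 2) :=
          ENNReal.ofReal_le_ofReal hlt.le
      _ = ∑ i, ∑ j, F (X (idx i j) ω) := by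
          rw [ENNReal.ofReal_sum_of_nonneg
            (f := fun i => ∑ j, truncLe (wignerMat X c n ω) ε i j ^ 2) fun _ _ => sum_nonneg fun _ _ => sq_nonneg _]
          refine sum_congr rfl fun i _ => ?_
          rw [ENNReal.ofReal_sum_of_nonneg fun _ _ => sq_nonneg _]
          simp only [hentry]
  have hmeasF : ∀ i j, Measurable fun ω => F (X (idx i j) ω) := fun i j => hF.comp (hmeas _)
  have hsame : ∀ p, ∫⁻ ω, F (X p ω) ∂μ = ∫⁻ ω, F (X (0, 0) ω) ∂μ := fun p => by
    rw [← lintegral_map hF (hmeas p), hlaw p, lintegral_map hF (hmeas _)]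
  calc μ {ω | δ < specNorm (truncLe (wignerMat X c n ω) ε)}
      ≤ μ {ω | ENNReal.ofReal (δ ^ 2) ≤ ∑ i, ∑ j, F (X (idx i j) ω)} := measure_mono hevent
    _ ≤ (∫⁻ ω, ∑ i, ∑ j, F (X (idx i j) ω) ∂μ) / ENNReal.ofReal (δ ^ 2) :=
        meas_ge_le_lintegral_div (Finset.measurable_sum _ fun i _ =>
          Finset.measurable_sum _ fun j _ => hmeasF i j).aemeasurable
          (by simpa using hδ.ne') ENNReal.ofReal_ne_top
    _ = n ^ 2 * (∫⁻ ω, F (X (0, 0) ω) ∂μ) / ENNReal.ofReal (δ ^ 2) := by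
        rw [lintegral_finsetSum _ fun i _ => Finset.measurable_sum _ fun j _ => hmeasF i j]
        simp only [lintegral_finsetSum _ fun j _ => hmeasF _ j, hsame, sum_const, card_univ,
          Fintype.card_fin, nsmul_eq_mul, ← mul_assoc, sq]

/-- A Karamata-type bound on the truncated second moment of `Y / c`, by splitting the range of
`|Y| / c ≤ ε` into the dyadic shells `(ε / 2^(k+1), ε / 2^k]`. -/
theorem lintegral_sq_truncate_le_of_potterBound (μ : Measure Ω) [IsProbabilityMeasure μ]
    {Y : Ω → ℝ} (hY : Measurable Y) {β x₀ ε c : ℝ} (hβ : β < 2) (hx₀ : 0 < x₀)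
    (hpotter : PotterBound (tailProb μ Y) β x₀)
    (hε : 0 < ε) (hε1 : ε ≤ 1) (hc : 0 < c) :
    ∫⁻ ω, ENNReal.ofReal ((if ε < |Y ω / c| then 0 else Y ω / c) ^ 2) ∂μ ≤
      ENNReal.ofReal ((2 * x₀ / c) ^ 2 +
        2 ^ (2 * β) / (1 - 2 ^ (β - 2)) * ε ^ (2 - β) * tailProb μ Y c) := by
  obtain ⟨K, hK, hKmin⟩ := exists_least_div_two_pow_le ε (by positivity : 0 < 2 * x₀ / c)
  have hshell : ∀ k : ℕ, μ {ω | ε / 2 ^ (k + 1) < |Y ω / c|} =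
      ENNReal.ofReal (tailProb μ Y (ε / 2 ^ (k + 1) * c)) := fun k => by
    simp only [abs_div, abs_of_pos hc, lt_div_iff₀ hc, tailProb, measureReal_def,
      ENNReal.ofReal_toReal (measure_ne_top _ _)]
  calc _ ≤ ENNReal.ofReal ((2 * x₀ / c) ^ 2) * μ Set.univ + ∑ k ∈ range K,
        ENNReal.ofReal ((ε / 2 ^ k) ^ 2) * μ {ω | ε / 2 ^ (k + 1) < |Y ω / c|} :=
        lintegral_sq_truncate_le_dyadic μ (hY.div_const c) (by positivity) hK
    _ = ENNReal.ofReal ((2 * x₀ / c) ^ 2 +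
          ∑ k ∈ range K, (ε / 2 ^ k) ^ 2 * tailProb μ Y (ε / 2 ^ (k + 1) * c)) := by
        simp only [measure_univ, mul_one, hshell]
        rw [ENNReal.ofReal_add (by positivity)
            (sum_nonneg fun k _ => mul_nonneg (by positivity) (tailProb_nonneg μ Y _)),
          ENNReal.ofReal_sum_of_nonneg fun k _ =>
            mul_nonneg (by positivity) (tailProb_nonneg μ Y _)]
        simp only [ENNReal.ofReal_mul (sq_nonneg _)]
    _ ≤ _ := by
        refine ENNReal.ofReal_le_ofReal (add_le_add le_rfl ?_)
        refine sum_sq_mul_le_of_potterBound hβ hpotter (tailProb_nonneg μ Y c) hε hε1 hc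
          fun k hk => ?_
        simpa only [div_lt_iff₀ hc] using hKmin k hk

theorem limsup_measure_lt_specNorm_truncLe_wignerMat_le (μ : Measure Ω) [IsProbabilityMeasure μ]
    {X : ℤ × ℤ → Ω → ℝ} (hmeas : ∀ p, Measurable (X p))
    (hlaw : ∀ p, μ.map (X p) = μ.map (X (0, 0))) {β x₀ : ℝ} (hβ : β < 2) (hx₀ : 0 < x₀)
    (hpotter : PotterBound (tailProb μ (X (0, 0))) β x₀)
    {b : ℕ → ℝ} (hb : ∀ᶠ n in atTop, 0 < b n)
    (hbT : ∀ᶠ n : ℕ in atTop, (n : ℝ) ^ 2 * tailProb μ (X (0, 0)) (b n) ≤ 2)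
    (hnb : Tendsto (fun n : ℕ => (n : ℝ) ^ 2 / b n ^ 2) atTop (𝓝 0))
    {ε δ : ℝ} (hε : 0 < ε) (hε1 : ε ≤ 1) (hδ : 0 < δ) :
    limsup (fun n => μ {ω | δ < specNorm (truncLe (wignerMat X (b n) n ω) ε)}) atTop ≤
      ENNReal.ofReal (2 * 2 ^ (2 * β) / (1 - 2 ^ (β - 2)) / δ ^ 2 * ε ^ (2 - β)) := by
  set D := 2 ^ (2 * β) / (1 - 2 ^ (β - 2)) * ε ^ (2 - β)
  have hD : 0 ≤ D := mul_nonneg (div_nonneg (by positivity)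
    (sub_nonneg.2 (Real.rpow_le_one_of_one_le_of_nonpos one_le_two (by linarith)))) (by positivity)
  have hbound : ∀ᶠ n : ℕ in atTop, μ {ω | δ < specNorm (truncLe (wignerMat X (b n) n ω) ε)} ≤
      ENNReal.ofReal (((n : ℝ) ^ 2 / b n ^ 2 * (2 * x₀) ^ 2 + 2 * D) / δ ^ 2) := by
    filter_upwards [hb, hbT] with n hbn hbTn
    have hmoment :=
      lintegral_sq_truncate_le_of_potterBound μ (hmeas (0, 0)) hβ hx₀ hpotter hε hε1 hbn
    calc _ ≤ _ := measure_lt_specNorm_truncLe_wignerMat_le μ hmeas hlaw (b n) ε hδ n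
      _ ≤ ENNReal.ofReal ((n : ℝ) ^ 2) * ENNReal.ofReal ((2 * x₀ / b n) ^ 2 +
            D * tailProb μ (X (0, 0)) (b n)) / ENNReal.ofReal (δ ^ 2) := by
          rw [← ENNReal.ofReal_natCast, ← ENNReal.ofReal_pow (Nat.cast_nonneg n)]
          gcongr
      _ = ENNReal.ofReal (((n : ℝ) ^ 2 / b n ^ 2 * (2 * x₀) ^ 2 +
            D * ((n : ℝ) ^ 2 * tailProb μ (X (0, 0)) (b n))) / δ ^ 2) := by
          rw [← ENNReal.ofReal_mul (by positivity), ← ENNReal.ofReal_div_of_pos (by positivity)]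
          congr 2
          field_simp
      _ ≤ _ := by
          refine ENNReal.ofReal_le_ofReal (div_le_div_of_nonneg_right ?_ (by positivity))
          linarith [mul_le_mul_of_nonneg_left hbTn hD]
  have hlim : Tendsto (fun n : ℕ => ENNReal.ofReal (((n : ℝ) ^ 2 / b n ^ 2 * (2 * x₀) ^ 2 + 2 * D)
      / δ ^ 2)) atTop (𝓝 (ENNReal.ofReal (2 * D / δ ^ 2))) :=
    ENNReal.tendsto_ofReal (by simpa using ((hnb.mul_const _).add_const (2 * D)).div_const (δ ^ 2))
  refine (limsup_le_limsup hbound).trans_eq (hlim.limsup_eq.trans ?_)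
  congr 1
  ring

end Probability

/-- eq. (4.3) of the paper: for a stationary regularly varying field with
index `α ∈ (0,2)`, `lim_{ε→0⁺} limsup_n ℙ(‖Â_n^{<ε}‖ > δ) = 0` for every `δ > 0`. -/
theorem stmt13 {Ω : Type*} [MeasurableSpace Ω] (μ : Measure Ω) [IsProbabilityMeasure μ]
    (X : ℤ × ℤ → Ω → ℝ) (hmeas : ∀ p, Measurable (X p))
    (hstat : IsStationaryField μ X)
    (α : ℝ) (hα0 : 0 < α) (hα2 : α < 2) (hreg : IsRegVarying μ X α)
    (a : ℕ → ℝ) (ha : IsNormSeq μ X a) :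
    ∀ δ : ℝ, 0 < δ →
      Tendsto
        (fun ε : ℝ =>
          Filter.limsup
            (fun n : ℕ => μ {ω | δ < specNorm (truncLe (wignerMat X (a (n ^ 2)) n ω) ε)})
            atTop)
        (nhdsWithin 0 (Set.Ioi 0)) (nhds 0) := by
  intro δ hδ
  set β := (α + 2) / 2 with hβ
  have hαβ : α < β := by linarith
  have hβ2 : β < 2 := by linarith
  obtain ⟨x₀, hx₀, hpotter⟩ := hreg.exists_potterBound hαβ (by positivity)
  have hsq : Tendsto (fun n : ℕ => n ^ 2) atTop atTop := tendsto_pow_atTop two_ne_zero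
  have hb : Tendsto (fun n : ℕ => a (n ^ 2)) atTop atTop := ha.1.comp hsq
  have hbT :
      Tendsto (fun n : ℕ => (n : ℝ) ^ 2 * tailProb μ (X (0, 0)) (a (n ^ 2))) atTop (𝓝 1) := by
    simpa [Function.comp_def, tailProb, measureReal_def] using ha.2.comp hsq
  replace hbT := hbT.eventually (eventually_le_nhds one_lt_two)
  have hnb := tendsto_sq_div_sq_of_potterBound hβ2 hx₀ (hreg.tailProb_pos hx₀) hpotter hb hbT
  have hbound := fun ε (hε : 0 < ε) (hε1 : ε ≤ 1) =>
    limsup_measure_lt_specNorm_truncLe_wignerMat_le μ hmeas (hstat.map_eq_map_zero hmeas) hβ2 hx₀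
      hpotter (hb.eventually_gt_atTop 0) hbT hnb hε hε1 hδ
  refine tendsto_of_tendsto_of_tendsto_of_le_of_le' tendsto_const_nhds
    (tendsto_ofReal_mul_rpow_nhdsGT_zero (p := 2 - β) (by linarith)
      (2 * 2 ^ (2 * β) / (1 - 2 ^ (β - 2)) / δ ^ 2))
    (Eventually.of_forall fun _ => bot_le) ?_
  filter_upwards [self_mem_nhdsWithin, Ioc_mem_nhdsGT one_pos] with ε hε hε1
  exact hbound ε hε hε1.2
end
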